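/- arXiv:0902.0760 — 2 statements merged into one kernel-verified Lean document; each statement's English description precedes it below -/
import Mathlib

section
/- Let j₁, j₂ ∈ ℂ[z] be coprime polynomials with N := deg j₁ > deg j₂ =: M and N ≥ 1, suppose j = j₁/j₂ is unramified outside {0,1,∞} (every complex root of j₁′j₂ − j₁j₂′ is a root of j₁·j₂·(j₁−j₂)), let Λ be the monic radical of j₁j₂(j₁−j₂), and let α, β, γ ∈ ℂ. Then for every z ∈ ℂ with j₁(z)·j₂(z)·(j₁(z) − j₂(z)) ≠ 0, the derivative j′(z) of the function j = j₁/j₂ is nonzero and the following identity holds: (γ − (α+β+1)j(z))/(j(z)(1 − j(z)))·j′(z) − j″(z)/j′(z) = Λ′(z)/Λ(z) + (γ−1)·j₁′(z)/j₁(z) + (α+β−γ)·(j₁−j₂)′(z)/(j₁(z)−j₂(z)) − (α+β)·j₂′(z)/j₂(z). -/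
/-!
With `W = j₂ j₁′ − j₂′ j₁` the Wronskian, `j′ = W / j₂²`. By coprimality exactly one of
`j₁, j₂, j₁ − j₂` vanishes at a root `t` of `F = j₁ j₂ (j₁ − j₂)`, and `W` vanishes there to
order one less; as `W` has no other roots, `W·Λ` and `F` have the same roots with multiplicity,
so they differ by a constant. Taking logarithmic derivatives, `Λ′/Λ = F′/F − W′/W`, while
`j″/j′ = W′/W − 2 j₂′/j₂`: the `W′/W` terms cancel and what remains is a partial-fraction
identity in `j₁, j₂, j₁′, j₂′`.
-/

open Polynomial

namespace Polynomial

section RootMultiplicity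

variable {R : Type*} [CommRing R]

theorem rootMultiplicity_sub_of_pow_dvd {p q : R[X]} {t : R} (hp : p ≠ 0)
    (hq : (X - C t) ^ (rootMultiplicity t p + 1) ∣ q) :
    rootMultiplicity t (p - q) = rootMultiplicity t p := by
  have hpq : p - q ≠ 0 := fun h =>
    pow_rootMultiplicity_not_dvd hp t (by rwa [← sub_eq_zero.mp h] at hq)
  refine le_antisymm ((rootMultiplicity_le_iff hpq _ _).mpr fun hd => ?_) ?_
  · exact pow_rootMultiplicity_not_dvd hp t (by simpa using dvd_add hd hq)
  · exact (le_rootMultiplicity_iff hpq).mpr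
      (dvd_sub (pow_rootMultiplicity_dvd p t) ((pow_dvd_pow _ le_self_add).trans hq))

theorem not_isRoot_and_isRoot_of_isCoprime [Nontrivial R] {a b : R[X]}
    (hab : IsCoprime a b) (t : R) : ¬ (a.IsRoot t ∧ b.IsRoot t) := fun ⟨ha, hb⟩ => by
  simpa [ha.eq_zero, hb.eq_zero] using aeval_ne_zero_of_isCoprime hab t

variable [IsDomain R]

theorem rootMultiplicity_neg (p : R[X]) (t : R) :
    rootMultiplicity t (-p) = rootMultiplicity t p := by
  classical
  rw [← count_roots, roots_neg, count_roots]

variable [CharZero R]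

theorem rootMultiplicity_wronskian_of_isRoot_right {a b : R[X]} {t : R} (ha : ¬ a.IsRoot t)
    (hb : b.IsRoot t) (hb0 : b ≠ 0) :
    rootMultiplicity t (wronskian a b) = rootMultiplicity t b - 1 := by
  have ha0 : a ≠ 0 := by rintro rfl; exact ha (by simp)
  have hb' : derivative b ≠ 0 := fun h => by
    rw [eq_C_of_derivative_eq_zero h] at hb hb0
    exact hb0 (by simpa using hb)
  have hlow : rootMultiplicity t (a * derivative b) = rootMultiplicity t b - 1 := by
    rw [rootMultiplicity_mul (mul_ne_zero ha0 hb'), rootMultiplicity_eq_zero ha,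
      derivative_rootMultiplicity_of_root hb, zero_add]
  have hhigh : (X - C t) ^ (rootMultiplicity t (a * derivative b) + 1) ∣ derivative a * b := by
    rw [hlow, Nat.sub_add_cancel ((rootMultiplicity_pos hb0).mpr hb)]
    exact (pow_rootMultiplicity_dvd b t).trans (dvd_mul_left _ _)
  rw [wronskian, rootMultiplicity_sub_of_pow_dvd (mul_ne_zero ha0 hb') hhigh, hlow]

theorem rootMultiplicity_wronskian_of_isRoot_left {a b : R[X]} {t : R} (ha : a.IsRoot t)
    (ha0 : a ≠ 0) (hb : ¬ b.IsRoot t) :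
    rootMultiplicity t (wronskian a b) = rootMultiplicity t a - 1 := by
  rw [← wronskian_neg_eq, rootMultiplicity_neg,
    rootMultiplicity_wronskian_of_isRoot_right hb ha ha0]

theorem rootMultiplicity_mul_mul_sub_eq_wronskian_add_one {a b : R[X]} {t : R}
    (hab : IsCoprime a b) (hF : a * b * (a - b) ≠ 0) (ht : (a * b * (a - b)).IsRoot t) :
    rootMultiplicity t (a * b * (a - b)) = rootMultiplicity t (wronskian b a) + 1 := by
  obtain ⟨⟨ha0, hb0⟩, hc0⟩ : (a ≠ 0 ∧ b ≠ 0) ∧ a - b ≠ 0 := by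
    simpa [mul_ne_zero_iff] using hF
  have hcop := not_isRoot_and_isRoot_of_isCoprime hab t
  rw [rootMultiplicity_mul hF, rootMultiplicity_mul (mul_ne_zero ha0 hb0)]
  simp only [IsRoot.def, eval_mul, mul_eq_zero] at ht
  rcases ht with (ha | hb) | hc
  · have hb : ¬ b.IsRoot t := fun hb => hcop ⟨ha, hb⟩
    have hc : ¬ (a - b).IsRoot t := by simpa [ha, sub_eq_zero, eq_comm] using hb
    have hpos := (rootMultiplicity_pos ha0).mpr ha
    rw [rootMultiplicity_wronskian_of_isRoot_right hb ha ha0, rootMultiplicity_eq_zero hb,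
      rootMultiplicity_eq_zero hc]
    omega
  · have ha : ¬ a.IsRoot t := fun ha => hcop ⟨ha, hb⟩
    have hc : ¬ (a - b).IsRoot t := by simpa [hb] using ha
    have hpos := (rootMultiplicity_pos hb0).mpr hb
    rw [rootMultiplicity_wronskian_of_isRoot_left hb hb0 ha, rootMultiplicity_eq_zero ha,
      rootMultiplicity_eq_zero hc]
    omega
  · have hab' : a.eval t = b.eval t := by simpa [sub_eq_zero] using hc
    have ha : ¬ a.IsRoot t := fun ha => hcop ⟨ha, by rwa [IsRoot.def, ← hab']⟩
    have hb : ¬ b.IsRoot t := fun hb => hcop ⟨by rwa [IsRoot.def, hab'], hb⟩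
    have hW : wronskian b a = wronskian b (a - b) := by
      rw [sub_eq_add_neg, wronskian_add_right, wronskian_neg_right, wronskian_self_eq_zero,
        neg_zero, add_zero]
    have hpos := (rootMultiplicity_pos hc0).mpr hc
    rw [hW, rootMultiplicity_wronskian_of_isRoot_right hb hc hc0, rootMultiplicity_eq_zero ha,
      rootMultiplicity_eq_zero hb]
    omega

end RootMultiplicity

section Factorization

variable {k : Type*} [Field k] [IsAlgClosed k] [CharZero k] [DecidableEq k]

theorem associated_wronskian_mul_prod_X_sub_C {a b : k[X]} (hab : IsCoprime a b)
    (hunram : ∀ t, (wronskian b a).IsRoot t → (a * b * (a - b)).IsRoot t)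
    (hW : wronskian b a ≠ 0) (hF : a * b * (a - b) ≠ 0) :
    Associated (wronskian b a * ∏ t ∈ (a * b * (a - b)).roots.toFinset, (X - C t))
      (a * b * (a - b)) := by
  have hΛ : ∏ t ∈ (a * b * (a - b)).roots.toFinset, (X - C t) ≠ 0 :=
    (monic_prod_of_monic _ _ fun t _ => monic_X_sub_C t).ne_zero
  rw [IsAlgClosed.associated_iff_roots_eq_roots (mul_ne_zero hW hΛ) hF,
    roots_mul (mul_ne_zero hW hΛ), roots_prod_X_sub_C]
  ext t
  rw [Multiset.count_add, count_roots, count_roots, Multiset.toFinset_val, Multiset.count_dedup]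
  by_cases ht : (a * b * (a - b)).IsRoot t
  · rw [if_pos ((mem_roots hF).mpr ht),
      rootMultiplicity_mul_mul_sub_eq_wronskian_add_one hab hF ht]
  · rw [if_neg (mt (mem_roots hF).mp ht), rootMultiplicity_eq_zero ht,
      rootMultiplicity_eq_zero (mt (hunram t) ht)]

end Factorization

section LogarithmicDerivative

variable {K : Type*} [Field K]

theorem eval_derivative_mul_div_eval_mul {p q : K[X]} {z : K} (hp : p.eval z ≠ 0)
    (hq : q.eval z ≠ 0) :
    (p * q).derivative.eval z / (p * q).eval z
      = p.derivative.eval z / p.eval z + q.derivative.eval z / q.eval z := by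
  simp only [derivative_mul, eval_add, eval_mul]
  field_simp

theorem _root_.Associated.eval_derivative_div_eval {p q : K[X]} (h : Associated p q) (z : K) :
    p.derivative.eval z / p.eval z = q.derivative.eval z / q.eval z := by
  obtain ⟨u, rfl⟩ := h
  obtain ⟨c, hc, hu⟩ := isUnit_iff.mp u.isUnit
  rw [← hu, derivative_mul, derivative_C, mul_zero, add_zero, eval_mul, eval_mul, eval_C,
    mul_div_mul_right _ _ hc.ne_zero]

end LogarithmicDerivative

section Quotient

variable {𝕜 : Type*} [NontriviallyNormedField 𝕜]

theorem hasDerivAt_eval_div_eval (p q : 𝕜[X]) {z : 𝕜} (hq : q.eval z ≠ 0) :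
    HasDerivAt (fun x => p.eval x / q.eval x) ((wronskian q p).eval z / q.eval z ^ 2) z := by
  refine ((p.hasDerivAt z).fun_div (q.hasDerivAt z) hq).congr_deriv ?_
  simp only [wronskian, eval_sub, eval_mul]
  ring

theorem deriv_deriv_eval_div_eval_div_deriv (p q : 𝕜[X]) {z : 𝕜} (hq : q.eval z ≠ 0)
    (hW : (wronskian q p).eval z ≠ 0) :
    deriv (deriv fun x => p.eval x / q.eval x) z / deriv (fun x => p.eval x / q.eval x) z
      = (wronskian q p).derivative.eval z / (wronskian q p).eval z
        - 2 * (q.derivative.eval z / q.eval z) := by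
  have hderiv : deriv (fun x => p.eval x / q.eval x)
      =ᶠ[nhds z] fun x => (wronskian q p).eval x / q.eval x ^ 2 :=
    (q.continuous.continuousAt.eventually_ne hq).mono fun x hx =>
      (hasDerivAt_eval_div_eval p q hx).deriv
  rw [hderiv.deriv_eq, (hasDerivAt_eval_div_eval p q hq).deriv,
    (((wronskian q p).hasDerivAt z).fun_div ((q.hasDerivAt z).fun_pow 2) (pow_ne_zero 2 hq)).deriv]
  field_simp
  ring

end Quotient

end Polynomial

theorem hypergeometric_coefficient_mul_wronskian_div_sq {K : Type*} [Field K] (α β γ : K)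
    {a b a' b' : K} (ha : a ≠ 0) (hb : b ≠ 0) (hab : a - b ≠ 0) :
    (γ - (α + β + 1) * (a / b)) / (a / b * (1 - a / b)) * ((b * a' - b' * a) / b ^ 2)
      = γ * (a' / a) + (α + β + 1 - γ) * ((a' - b') / (a - b)) - (α + β + 1) * (b' / b) := by
  have hba : b - a ≠ 0 := by rwa [← neg_sub, neg_ne_zero]
  field_simp
  ring

theorem belyi_pullback_first_order_coefficient_general
    (j₁ j₂ : Polynomial ℂ)
    (hcop : IsCoprime j₁ j₂)
    (hunram : ∀ z : ℂ, (derivative j₁ * j₂ - j₁ * derivative j₂).IsRoot z →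
      (j₁ * j₂ * (j₁ - j₂)).IsRoot z)
    (Λ : Polynomial ℂ)
    (hΛ : Λ = ∏ t ∈ (j₁ * j₂ * (j₁ - j₂)).roots.toFinset, (X - C t))
    (α β γ : ℂ)
    (j : ℂ → ℂ) (hj : j = fun z => j₁.eval z / j₂.eval z) :
    ∀ z : ℂ, j₁.eval z * j₂.eval z * (j₁.eval z - j₂.eval z) ≠ 0 →
      deriv j z ≠ 0 ∧
      (γ - (α + β + 1) * j z) / (j z * (1 - j z)) * deriv j z
          - deriv (deriv j) z / deriv j z
        = (Λ.derivative.eval z) / (Λ.eval z)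
          + (γ - 1) * ((j₁.derivative.eval z) / (j₁.eval z))
          + (α + β - γ) * (((j₁ - j₂).derivative.eval z) / ((j₁ - j₂).eval z))
          - (α + β) * ((j₂.derivative.eval z) / (j₂.eval z)) := by
  intro z hz
  obtain ⟨⟨ha, hb⟩, hc⟩ : (j₁.eval z ≠ 0 ∧ j₂.eval z ≠ 0) ∧ (j₁ - j₂).eval z ≠ 0 := by
    simpa [mul_ne_zero_iff] using hz
  have hF : (j₁ * j₂ * (j₁ - j₂)).eval z ≠ 0 := by simpa using hz
  rw [show derivative j₁ * j₂ - j₁ * derivative j₂ = wronskian j₂ j₁ by rw [wronskian]; ring]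
    at hunram
  have hW : (wronskian j₂ j₁).eval z ≠ 0 := fun h => hF (hunram z h)
  have hassoc := associated_wronskian_mul_prod_X_sub_C hcop hunram
    (fun h => hW (by simp [h])) (fun h => hF (by simp [h]))
  rw [← hΛ] at hassoc
  have hΛz : Λ.eval z ≠ 0 := fun h =>
    hF (IsRoot.dvd h ((dvd_mul_left Λ _).trans hassoc.dvd))
  have hlogΛ := hassoc.eval_derivative_div_eval z
  rw [eval_derivative_mul_div_eval_mul hW hΛz,
    eval_derivative_mul_div_eval_mul (by simp [ha, hb]) hc, eval_derivative_mul_div_eval_mul ha hb]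
    at hlogΛ
  subst hj
  have hj' := (hasDerivAt_eval_div_eval j₁ j₂ hb).deriv
  refine ⟨hj' ▸ div_ne_zero hW (pow_ne_zero 2 hb), ?_⟩
  rw [deriv_deriv_eval_div_eval_div_deriv j₁ j₂ hb hW, hj', eq_sub_of_add_eq' hlogΛ]
  have hWz : (wronskian j₂ j₁).eval z = j₂.eval z * j₁.derivative.eval z
      - j₂.derivative.eval z * j₁.eval z := by simp [wronskian]
  beta_reduce
  rw [hWz, hypergeometric_coefficient_mul_wronskian_div_sq α β γ ha hb (by simpa using hc),
    derivative_sub, eval_sub, eval_sub]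
  ring

/-- The logarithmic-derivative identity used in the proof of Theorem 1: for a
rational Belyi function `j = j₁/j₂` unramified outside `{0,1,∞}`, away from the
zeros of `j₁·j₂·(j₁−j₂)` the derivative `j′` is nonzero and the pulled-back
hypergeometric first-order coefficient `p₁(j)·j′ − j″/j′` equals
`Λ′/Λ + (γ−1)·j₁′/j₁ + (α+β−γ)·(j₁−j₂)′/(j₁−j₂) − (α+β)·j₂′/j₂`. -/
theorem belyi_pullback_first_order_coefficient
    (j₁ j₂ : Polynomial ℂ)
    (hcop : IsCoprime j₁ j₂)
    (hdeg : j₂.degree < j₁.degree)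
    (hN : 1 ≤ j₁.natDegree)
    (hunram : ∀ z : ℂ, (derivative j₁ * j₂ - j₁ * derivative j₂).IsRoot z →
      (j₁ * j₂ * (j₁ - j₂)).IsRoot z)
    (Λ : Polynomial ℂ)
    (hΛ : Λ = ∏ t ∈ (j₁ * j₂ * (j₁ - j₂)).roots.toFinset, (X - C t))
    (α β γ : ℂ)
    (j : ℂ → ℂ) (hj : j = fun z => j₁.eval z / j₂.eval z) :
    ∀ z : ℂ, j₁.eval z * j₂.eval z * (j₁.eval z - j₂.eval z) ≠ 0 →
      deriv j z ≠ 0 ∧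
      (γ - (α + β + 1) * j z) / (j z * (1 - j z)) * deriv j z
          - deriv (deriv j) z / deriv j z
        = (Λ.derivative.eval z) / (Λ.eval z)
          + (γ - 1) * ((j₁.derivative.eval z) / (j₁.eval z))
          + (α + β - γ) * (((j₁ - j₂).derivative.eval z) / ((j₁ - j₂).eval z))
          - (α + β) * ((j₂.derivative.eval z) / (j₂.eval z)) :=
  belyi_pullback_first_order_coefficient_general j₁ j₂ hcop hunram Λ hΛ α β γ j hj
end

section
/- Let α, β, γ ∈ ℂ with γ − α − β = 1/2, set j(z) = −4z²(z−1)(z+1) = 4z² − 4z⁴. Let U ⊆ ℂ be open with z·(z−1)·(z+1)·(2z²−1) ≠ 0 for all z ∈ U, let V ⊆ ℂ \ {0,1} be open with j(U) ⊆ V, and let Y be a solution of the hypergeometric equation with parameters α, β, γ on V. Then the function y(z) := Y(j(z)) satisfies, for all z ∈ U, y″(z) + ((2γ−1)/z + γ/(z−1) + γ/(z+1))·y′(z) + (16αβ/((z−1)(z+1)))·y(z) = 0; in particular, the double roots ±1/√2 of j − 1 are not singularities of the resulting equation. -/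
/-!
By the chain rule `y = Y ∘ j` satisfies `y'' = Y''(j) j'² + Y'(j) j''`, so eliminating `Y''(j)` with
the hypergeometric equation `Y'' + p Y' + q Y = 0` gives `y'' + P y' + Q y = 0` with
`P j' = p(j) j'² - j''` and `Q = q(j) j'²`. For `j = 4z² - 4z⁴` one has `1 - j = (2z² - 1)²` and
`j' = 8z(1 - 2z²)`, so the factor `(2z² - 1)²` of `j(1 - j)` cancels against `j'²`: this is why
`±1/√2` are not singular points, and with `γ - α - β = 1/2` the coefficients reduce to those of the
Heun equation.
-/

open Filter Topology

section SecondOrderPullback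

variable {𝕜 : Type*} [NontriviallyNormedField 𝕜]

def SolvesSecondOrderAt (p q : 𝕜) (Y : 𝕜 → 𝕜) (w : 𝕜) : Prop :=
  deriv (deriv Y) w + p * deriv Y w + q * Y w = 0

variable {Y f : 𝕜 → 𝕜} {z : 𝕜}

theorem deriv_deriv_comp_of_eventually (hY : ∀ᶠ w in 𝓝 (f z), DifferentiableAt 𝕜 Y w)
    (hf : ∀ᶠ x in 𝓝 z, DifferentiableAt 𝕜 f x) (hY' : DifferentiableAt 𝕜 (deriv Y) (f z))
    (hf' : DifferentiableAt 𝕜 (deriv f) z) :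
    deriv (deriv fun x => Y (f x)) z
      = deriv (deriv Y) (f z) * deriv f z ^ 2 + deriv Y (f z) * deriv (deriv f) z := by
  have hYf : ∀ᶠ x in 𝓝 z, DifferentiableAt 𝕜 Y (f x) :=
    hf.self_of_nhds.continuousAt.tendsto.eventually hY
  have hchain : deriv (fun x => Y (f x)) =ᶠ[𝓝 z] fun x => deriv Y (f x) * deriv f x := by
    filter_upwards [hYf, hf] with x hYx hfx
    exact (hYx.hasDerivAt.comp x hfx.hasDerivAt).deriv
  rw [hchain.deriv_eq]
  refine ((hY'.hasDerivAt.comp z hf.self_of_nhds.hasDerivAt).fun_mul hf'.hasDerivAt).deriv.trans ?_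
  simp only [Function.comp_apply]
  ring

theorem SolvesSecondOrderAt.comp {p q P Q : 𝕜} (hode : SolvesSecondOrderAt p q Y (f z))
    (hY : ∀ᶠ w in 𝓝 (f z), DifferentiableAt 𝕜 Y w) (hf : ∀ᶠ x in 𝓝 z, DifferentiableAt 𝕜 f x)
    (hY' : DifferentiableAt 𝕜 (deriv Y) (f z)) (hf' : DifferentiableAt 𝕜 (deriv f) z)
    (hP : P * deriv f z = p * deriv f z ^ 2 - deriv (deriv f) z) (hQ : Q = q * deriv f z ^ 2) :
    SolvesSecondOrderAt P Q (fun x => Y (f x)) z := by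
  have hchain : deriv (fun x => Y (f x)) z = deriv Y (f z) * deriv f z :=
    (hY.self_of_nhds.hasDerivAt.comp z hf.self_of_nhds.hasDerivAt).deriv
  unfold SolvesSecondOrderAt at hode ⊢
  rw [deriv_deriv_comp_of_eventually hY hf hY' hf', hchain]
  linear_combination deriv f z ^ 2 * hode + deriv Y (f z) * hP + Y (f z) * hQ

end SecondOrderPullback

section QuarticCover

def quarticCover {R : Type*} [Ring R] (z : R) : R := 4 * z ^ 2 - 4 * z ^ 4

variable {𝕜 : Type*} [NontriviallyNormedField 𝕜]

theorem hasDerivAt_quarticCover (z : 𝕜) : HasDerivAt quarticCover (8 * z - 16 * z ^ 3) z := by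
  refine (((hasDerivAt_pow 2 z).const_mul 4).fun_sub
    ((hasDerivAt_pow 4 z).const_mul 4)).congr_deriv ?_
  push_cast
  ring

theorem deriv_quarticCover : deriv (quarticCover : 𝕜 → 𝕜) = fun z => 8 * z - 16 * z ^ 3 :=
  funext fun z => (hasDerivAt_quarticCover z).deriv

theorem deriv_deriv_quarticCover (z : 𝕜) :
    deriv (deriv (quarticCover : 𝕜 → 𝕜)) z = 8 - 48 * z ^ 2 := by
  rw [deriv_quarticCover]
  refine (((hasDerivAt_id' z).const_mul 8).fun_sub
    ((hasDerivAt_pow 3 z).const_mul 16)).deriv.trans ?_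
  push_cast
  ring

end QuarticCover

section Coefficients

theorem quarticCover_eq_neg_mul {R : Type*} [CommRing R] (z : R) :
    quarticCover z = -(4 * z ^ 2 * (z - 1) * (z + 1)) := by
  unfold quarticCover
  ring

theorem one_sub_quarticCover {R : Type*} [CommRing R] (z : R) :
    1 - quarticCover z = (2 * z ^ 2 - 1) ^ 2 := by
  unfold quarticCover
  ring

theorem ne_zero_of_quarticCover {K : Type*} [Field K] {z : K} (hw0 : quarticCover z ≠ 0)
    (hw1 : quarticCover z ≠ 1) : z ≠ 0 ∧ z - 1 ≠ 0 ∧ z + 1 ≠ 0 ∧ 2 * z ^ 2 - 1 ≠ 0 := by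
  rw [quarticCover_eq_neg_mul, neg_ne_zero] at hw0
  rw [ne_comm, ← sub_ne_zero, one_sub_quarticCover] at hw1
  refine ⟨?_, ?_, ?_, (pow_ne_zero_iff two_ne_zero).mp hw1⟩ <;> intro h <;> simp [h] at hw0

variable {K : Type*} [Field K] [CharZero K] {z : K}

theorem quarticCover_pullback_first_coeff {α β γ : K} (hγ : γ - α - β = 1 / 2)
    (hw0 : quarticCover z ≠ 0) (hw1 : quarticCover z ≠ 1) :
    ((2 * γ - 1) / z + γ / (z - 1) + γ / (z + 1)) * (8 * z - 16 * z ^ 3)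
      = (γ - (α + β + 1) * quarticCover z) / (quarticCover z * (1 - quarticCover z))
          * (8 * z - 16 * z ^ 3) ^ 2 - (8 - 48 * z ^ 2) := by
  obtain ⟨hz0, hz1, hz1', hz2⟩ := ne_zero_of_quarticCover hw0 hw1
  rw [show α + β + 1 = γ + 1 / 2 by linear_combination -hγ, one_sub_quarticCover,
    quarticCover_eq_neg_mul]
  field_simp
  ring

theorem quarticCover_pullback_zeroth_coeff {α β : K} (hw0 : quarticCover z ≠ 0)
    (hw1 : quarticCover z ≠ 1) :
    16 * α * β / ((z - 1) * (z + 1))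
      = α * β / (quarticCover z * (quarticCover z - 1)) * (8 * z - 16 * z ^ 3) ^ 2 := by
  obtain ⟨hz0, hz1, hz1', hz2⟩ := ne_zero_of_quarticCover hw0 hw1
  rw [← neg_sub 1 (quarticCover z), one_sub_quarticCover, quarticCover_eq_neg_mul,
    div_mul_eq_mul_div, div_eq_div_iff (mul_ne_zero hz1 hz1') (by simp [*])]
  ring

end Coefficients

theorem pullback_quartic_heun_general
    (α β γ : ℂ) (hγ : γ - α - β = 1 / 2)
    (j : ℂ → ℂ) (hj : j = fun z => 4 * z ^ 2 - 4 * z ^ 4)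
    (U V : Set ℂ) (hV : IsOpen V)
    (hV01 : ∀ w ∈ V, w ≠ 0 ∧ w ≠ 1)
    (hjUV : ∀ z ∈ U, j z ∈ V)
    (Y : ℂ → ℂ)
    (hY₁ : ∀ w ∈ V, DifferentiableAt ℂ Y w)
    (hY₂ : ∀ w ∈ V, DifferentiableAt ℂ (deriv Y) w)
    (hYhyp : ∀ w ∈ V,
      deriv (deriv Y) w + ((γ - (α + β + 1) * w) / (w * (1 - w))) * deriv Y w
        + (α * β / (w * (w - 1))) * Y w = 0)
    (y : ℂ → ℂ) (hy : y = fun z => Y (j z)) :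
    ∀ z ∈ U,
      deriv (deriv y) z
        + ((2 * γ - 1) / z + γ / (z - 1) + γ / (z + 1)) * deriv y z
        + (16 * α * β / ((z - 1) * (z + 1))) * y z = 0 := by
  obtain rfl : j = quarticCover := hj
  subst hy
  intro z hz
  have hwV := hjUV z hz
  obtain ⟨hw0, hw1⟩ := hV01 _ hwV
  refine SolvesSecondOrderAt.comp (hYhyp _ hwV) (eventually_of_mem (hV.mem_nhds hwV) hY₁)
    (Eventually.of_forall fun x => (hasDerivAt_quarticCover x).differentiableAt) (hY₂ _ hwV)
    ?_ ?_ ?_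
  · rw [deriv_quarticCover]
    fun_prop
  · rw [deriv_deriv_quarticCover, deriv_quarticCover]
    exact quarticCover_pullback_first_coeff hγ hw0 hw1
  · rw [deriv_quarticCover]
    exact quarticCover_pullback_zeroth_coeff hw0 hw1

/-- Row 35 of Table 1b: the quartic pull-back by `j(z) = −4z²(z−1)(z+1)`
(ramification data `(2)(1)(1),(2)(2),(4)`) of the hypergeometric equation with
parameters `α, β, γ` satisfying `γ − α − β = 1/2` gives the Heun equation
`y″ + ((2γ−1)/z + γ/(z−1) + γ/(z+1))·y′ + (16αβ/((z−1)(z+1)))·y = 0`;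
in particular the double roots `±1/√2` of `j − 1` are not singularities. -/
theorem pullback_quartic_heun
    (α β γ : ℂ) (hγ : γ - α - β = 1 / 2)
    (j : ℂ → ℂ) (hj : j = fun z => 4 * z ^ 2 - 4 * z ^ 4)
    (U V : Set ℂ) (hU : IsOpen U) (hV : IsOpen V)
    (hUreg : ∀ z ∈ U, z * (z - 1) * (z + 1) * (2 * z ^ 2 - 1) ≠ 0)
    (hV01 : ∀ w ∈ V, w ≠ 0 ∧ w ≠ 1)
    (hjUV : ∀ z ∈ U, j z ∈ V)
    (Y : ℂ → ℂ)
    (hY₁ : ∀ w ∈ V, DifferentiableAt ℂ Y w)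
    (hY₂ : ∀ w ∈ V, DifferentiableAt ℂ (deriv Y) w)
    (hYhyp : ∀ w ∈ V,
      deriv (deriv Y) w + ((γ - (α + β + 1) * w) / (w * (1 - w))) * deriv Y w
        + (α * β / (w * (w - 1))) * Y w = 0)
    (y : ℂ → ℂ) (hy : y = fun z => Y (j z)) :
    ∀ z ∈ U,
      deriv (deriv y) z
        + ((2 * γ - 1) / z + γ / (z - 1) + γ / (z + 1)) * deriv y z
        + (16 * α * β / ((z - 1) * (z + 1))) * y z = 0 :=
  pullback_quartic_heun_general α β γ hγ j hj U V hV hV01 hjUV Y hY₁ hY₂ hYhyp y hy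
end
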